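/- Let p be a probability distribution over a countable alphabet, X^n an i.i.d. sample of size n, and M_max(X^n) = max over symbols u not appearing in X^n of p(u) (with M_max = 0 if all symbols appear). Then for every r ≥ 1 and every α ∈ (0,1), P(M_max(X^n) ≥ ((q*)^{r-1}(1-q*)^n / α)^{1/r}) ≤ α, where q* = (r-1)/(r-1+n). -/

import Mathlib

/-!
Markov's inequality applied to `M_r = ∑_{u unseen} p(u)^r`, which dominates `M_max^r`.
Its mean is `∑ p(u)^r (1 - p(u))^n ≤ (∑ p(u)) · max_{s ∈ [0,1]} s^(r-1) (1 - s)^n`, and by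
weighted AM-GM the maximum is attained at `s = q* = (r-1)/(r-1+n)`.
-/

open MeasureTheory ENNReal

namespace Real

theorem rpow_mul_one_sub_rpow_le {q s : ℝ} (hq₀ : 0 < q) (hq₁ : q < 1) (hs₀ : 0 ≤ s)
    (hs₁ : s ≤ 1) :
    s ^ q * (1 - s) ^ (1 - q) ≤ q ^ q * (1 - q) ^ (1 - q) := by
  have hq₁' : 0 < 1 - q := by linarith
  have amgm := geom_mean_le_arith_mean2_weighted hq₀.le hq₁'.le (div_nonneg hs₀ hq₀.le)
    (div_nonneg (sub_nonneg.2 hs₁) hq₁'.le) (by ring)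
  rwa [mul_div_cancel₀ _ hq₀.ne', mul_div_cancel₀ _ hq₁'.ne', add_sub_cancel,
    div_rpow hs₀ hq₀.le, div_rpow (sub_nonneg.2 hs₁) hq₁'.le, div_mul_div_comm,
    div_le_one (by positivity)] at amgm

theorem rpow_mul_one_sub_pow_le {a : ℝ} (ha : 0 ≤ a) (n : ℕ) {s : ℝ} (hs₀ : 0 ≤ s)
    (hs₁ : s ≤ 1) :
    s ^ a * (1 - s) ^ n ≤ (a / (a + n)) ^ a * (1 - a / (a + n)) ^ n := by
  rcases ha.eq_or_lt with rfl | ha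
  · simpa using pow_le_one₀ (sub_nonneg.2 hs₁) (by linarith)
  rcases n.eq_zero_or_pos with rfl | hn
  · simpa [ha.ne'] using rpow_le_one hs₀ hs₁ ha.le
  have hn : (0 : ℝ) < n := Nat.cast_pos.2 hn
  have hq₀ : 0 < a / (a + n) := by positivity
  have hq₁ : a / (a + n) < 1 := (div_lt_one (by positivity)).2 (by linarith)
  have hq : 1 - a / (a + n) = n / (a + n) := by field_simp; ring
  have key := rpow_le_rpow (by positivity) (rpow_mul_one_sub_rpow_le hq₀ hq₁ hs₀ hs₁)
    (by positivity : 0 ≤ a + n)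
  rw [mul_rpow (by positivity) (by positivity), mul_rpow (by positivity) (by positivity),
    ← rpow_mul hs₀, ← rpow_mul (sub_nonneg.2 hs₁), ← rpow_mul hq₀.le, ← rpow_mul (by linarith),
    hq, div_mul_cancel₀ a (by positivity : a + n ≠ 0),
    div_mul_cancel₀ (n : ℝ) (by positivity : a + n ≠ 0), rpow_natCast, rpow_natCast] at key
  rwa [hq]

end Real

theorem ENNReal.rpow_mul_one_sub_pow_le {a : ℝ} (ha : 0 ≤ a) (n : ℕ) {s : ℝ≥0∞}
    (hs : s ≤ 1) :
    s ^ a * (1 - s) ^ n ≤ ENNReal.ofReal ((a / (a + n)) ^ a * (1 - a / (a + n)) ^ n) := by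
  have hs' : s ≠ ⊤ := ne_top_of_le_ne_top one_ne_top hs
  have hs₁ : s.toReal ≤ 1 := toReal_le_of_le_ofReal zero_le_one (by simpa using hs)
  rw [← ofReal_toReal hs', ← ENNReal.ofReal_one, ← ofReal_sub _ toReal_nonneg,
    ofReal_rpow_of_nonneg toReal_nonneg ha, ← ofReal_pow (sub_nonneg.2 hs₁),
    ← ofReal_mul (by positivity)]
  exact ofReal_le_ofReal (Real.rpow_mul_one_sub_pow_le ha n toReal_nonneg hs₁)

section UnseenSymbols

variable {X ι : Type*}

theorem ite_card_filter_eq_zero_eq_indicator {M : Type*} [Zero M] [Fintype ι] [DecidableEq X]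
    (x : ι → X) (f : X → M) (u : X) :
    (if (Finset.univ.filter fun i => x i = u).card = 0 then f u else 0)
      = (Set.range x)ᶜ.indicator f u := by
  simp [Set.indicator_apply, Finset.filter_eq_empty_iff]

theorem Set.setOf_notMem_range_eq_pi (u : X) :
    {x : ι → X | u ∉ Set.range x} = Set.univ.pi fun _ => {u}ᶜ := by
  ext x
  simp [Set.mem_pi, eq_comm]

theorem measurableSet_setOf_notMem_range [MeasurableSpace X] [MeasurableSingletonClass X]
    [Countable ι] (u : X) : MeasurableSet {x : ι → X | u ∉ Set.range x} := by
  rw [Set.setOf_notMem_range_eq_pi]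
  exact .univ_pi fun _ => (measurableSet_singleton u).compl

end UnseenSymbols

namespace PMF

variable {X ι : Type*}

noncomputable def unseenPowerSum (p : PMF X) (r : ℝ) (x : ι → X) : ℝ≥0∞ :=
  ∑' u, (Set.range x)ᶜ.indicator (fun u => p u ^ r) u

theorem unseenPowerSum_eq_tsum_indicator (p : PMF X) (r : ℝ) :
    p.unseenPowerSum r = fun x : ι → X =>
      ∑' u, {x : ι → X | u ∉ Set.range x}.indicator (fun _ => p u ^ r) x :=
  rfl

theorem rpow_le_unseenPowerSum (p : PMF X) (r : ℝ) {x : ι → X} {u : X}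
    (hu : u ∉ Set.range x) :
    p u ^ r ≤ p.unseenPowerSum r x := by
  rw [← Set.indicator_of_mem (Set.mem_compl hu) fun u => p u ^ r]
  exact ENNReal.le_tsum u

theorem unseenPowerSum_le_one (p : PMF X) {r : ℝ} (hr : 1 ≤ r) (x : ι → X) :
    p.unseenPowerSum r x ≤ 1 := calc
  p.unseenPowerSum r x ≤ ∑' u, p u :=
    ENNReal.tsum_le_tsum fun u => (Set.indicator_le_self _ _ u).trans
      (ENNReal.rpow_le_self_of_le_one (p.coe_le_one u) hr)
  _ = 1 := p.tsum_coe

theorem ofReal_rpow_le_unseenPowerSum (p : PMF X) {r : ℝ} (hr : 1 ≤ r) {x : ι → X} {t : ℝ}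
    (ht : t ≤ ⨆ u, (Set.range x)ᶜ.indicator (fun u => (p u).toReal) u) :
    ENNReal.ofReal t ^ r ≤ p.unseenPowerSum r x := by
  have : Nonempty X := let ⟨u, _⟩ := p.support_nonempty; ⟨u⟩
  have hr₀ : 0 < r := by linarith
  have hfin : p.unseenPowerSum r x ^ r⁻¹ ≠ ⊤ :=
    ENNReal.rpow_ne_top_of_nonneg (by positivity)
      (ne_top_of_le_ne_top one_ne_top (p.unseenPowerSum_le_one hr x))
  rw [← ENNReal.le_rpow_inv_iff hr₀]
  refine ENNReal.ofReal_le_of_le_toReal (ht.trans (ciSup_le fun u => ?_))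
  exact Set.indicator_apply_le'
    (fun hu => toReal_mono hfin ((le_rpow_inv_iff hr₀).2 (p.rpow_le_unseenPowerSum r hu)))
    fun _ => toReal_nonneg

theorem tsum_rpow_mul_one_sub_pow_le (p : PMF X) {r : ℝ} (hr : 1 ≤ r) (n : ℕ) :
    ∑' u, p u ^ r * (1 - p u) ^ n
      ≤ ENNReal.ofReal (((r - 1) / (r - 1 + n)) ^ (r - 1) * (1 - (r - 1) / (r - 1 + n)) ^ n) :=
  calc
  _ ≤ ∑' u, p u *
        ENNReal.ofReal (((r - 1) / (r - 1 + n)) ^ (r - 1) * (1 - (r - 1) / (r - 1 + n)) ^ n) := by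
    refine ENNReal.tsum_le_tsum fun u => ?_
    conv_lhs => rw [← add_sub_cancel 1 r]
    rw [ENNReal.rpow_add_of_nonneg 1 (r - 1) zero_le_one (sub_nonneg.2 hr), ENNReal.rpow_one,
      mul_assoc]
    gcongr
    exact ENNReal.rpow_mul_one_sub_pow_le (sub_nonneg.2 hr) n (p.coe_le_one u)
  _ = _ := by rw [ENNReal.tsum_mul_right, p.tsum_coe, one_mul]

variable [MeasurableSpace X] [MeasurableSingletonClass X]

theorem measurable_unseenPowerSum [Countable ι] [Countable X] (p : PMF X) (r : ℝ) :
    Measurable (p.unseenPowerSum (ι := ι) r) := by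
  rw [unseenPowerSum_eq_tsum_indicator]
  exact .tsum fun u => measurable_const.indicator (measurableSet_setOf_notMem_range u)

theorem pi_toMeasure_notMem_range [Fintype ι] (p : PMF X) (u : X) :
    Measure.pi (fun _ : ι => p.toMeasure) {x | u ∉ Set.range x}
      = (1 - p u) ^ Fintype.card ι := by
  rw [Set.setOf_notMem_range_eq_pi, Measure.pi_pi, Finset.prod_const, Finset.card_univ,
    prob_compl_eq_one_sub (measurableSet_singleton u),
    p.toMeasure_apply_singleton u (measurableSet_singleton u)]

theorem lintegral_unseenPowerSum [Fintype ι] [Countable X] (p : PMF X) (r : ℝ) :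
    ∫⁻ x, p.unseenPowerSum r x ∂Measure.pi (fun _ : ι => p.toMeasure)
      = ∑' u, p u ^ r * (1 - p u) ^ Fintype.card ι := by
  rw [unseenPowerSum_eq_tsum_indicator,
    lintegral_tsum fun u => aemeasurable_const.indicator (measurableSet_setOf_notMem_range u)]
  simp_rw [lintegral_indicator_const (measurableSet_setOf_notMem_range _),
    pi_toMeasure_notMem_range]

end PMF

theorem Mmax_confidence_interval_general {X : Type*} [MeasurableSpace X]
    [MeasurableSingletonClass X] [Countable X] [DecidableEq X]
    (p : PMF X) (n : ℕ) (r : ℝ) (hr : 1 ≤ r)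
    (α : ℝ) (hα : α ∈ Set.Ioo (0 : ℝ) 1) :
    (Measure.pi fun _ : Fin n => p.toMeasure)
      {x : Fin n → X |
        (((r - 1) / (r - 1 + n)) ^ (r - 1) * (1 - (r - 1) / (r - 1 + n)) ^ n / α) ^ (1 / r)
          ≤ ⨆ u : X,
              (if (Finset.univ.filter fun i => x i = u).card = 0 then (p u).toReal else 0)}
    ≤ ENNReal.ofReal α := by
  set C := ((r - 1) / (r - 1 + n)) ^ (r - 1) * (1 - (r - 1) / (r - 1 + n)) ^ n
  -- `C` is the maximum of `s ^ (r - 1) * (1 - s) ^ n` on `[0, 1]`, hence at least its value at 1/2.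
  have hC : 0 < C := (by positivity : (0 : ℝ) < (1 / 2) ^ (r - 1) * (1 - 1 / 2) ^ n).trans_le
    (Real.rpow_mul_one_sub_pow_le (sub_nonneg.2 hr) n (by norm_num) (by norm_num))
  have hCα : 0 < C / α := div_pos hC hα.1
  have hthreshold : ENNReal.ofReal ((C / α) ^ (1 / r)) ^ r = ENNReal.ofReal (C / α) := by
    rw [ENNReal.ofReal_rpow_of_nonneg (by positivity) (by linarith), one_div,
      Real.rpow_inv_rpow hCα.le (by linarith)]
  simp_rw [ite_card_filter_eq_zero_eq_indicator (f := fun u => (p u).toReal)]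
  calc _ ≤ Measure.pi (fun _ : Fin n => p.toMeasure)
          {x | ENNReal.ofReal (C / α) ≤ p.unseenPowerSum r x} :=
        measure_mono fun x hx => hthreshold ▸ p.ofReal_rpow_le_unseenPowerSum hr hx
    _ ≤ (∫⁻ x, p.unseenPowerSum r x ∂Measure.pi fun _ : Fin n => p.toMeasure)
          / ENNReal.ofReal (C / α) :=
        meas_ge_le_lintegral_div (p.measurable_unseenPowerSum r).aemeasurable
          (ENNReal.ofReal_pos.2 hCα).ne' ENNReal.ofReal_ne_top
    _ ≤ ENNReal.ofReal C / ENNReal.ofReal (C / α) := by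
        rw [PMF.lintegral_unseenPowerSum, Fintype.card_fin]
        exact ENNReal.div_le_div_right (p.tsum_rpow_mul_one_sub_pow_le hr n) _
    _ = ENNReal.ofReal α := by
        rw [← ENNReal.ofReal_div_of_pos hCα, div_div_cancel₀ hC.ne']

/-- Let `p` be a probability distribution over a countable alphabet, `X^n`
an i.i.d. sample of size `n`, and `M_max(X^n) = sup_u p(u)·1{N_u(X^n)=0}` (which is `0`
if all symbols appear). Then for every `r ≥ 1` and every `α ∈ (0,1)`,
`P(M_max(X^n) ≥ ((q*)^(r-1)(1-q*)^n / α)^(1/r)) ≤ α`, where `q* = (r-1)/(r-1+n)`. -/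
theorem Mmax_confidence_interval {X : Type*} [MeasurableSpace X]
    [MeasurableSingletonClass X] [Countable X] [DecidableEq X] [Nonempty X]
    (p : PMF X) (n : ℕ) (hn : 1 ≤ n) (r : ℝ) (hr : 1 ≤ r)
    (α : ℝ) (hα : α ∈ Set.Ioo (0 : ℝ) 1) :
    (Measure.pi fun _ : Fin n => p.toMeasure)
      {x : Fin n → X |
        (((r - 1) / (r - 1 + n)) ^ (r - 1) * (1 - (r - 1) / (r - 1 + n)) ^ n / α) ^ (1 / r)
          ≤ ⨆ u : X,
              (if (Finset.univ.filter fun i => x i = u).card = 0 then (p u).toReal else 0)}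
    ≤ ENNReal.ofReal α :=
  Mmax_confidence_interval_general p n r hr α hα
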